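/- arXiv:2309.12629 — 6 statements merged into one kernel-verified Lean document; each statement's English description precedes it below -/
import Mathlib

section
/- Let N_S > 0, N_B > 0, κ ∈ (0, 1), M > 0. Define I_CD = 4MκN_S(N_S+1)/(1 + N_B + N_S(2N_B + 2 − κ)) and I_CS = 4MκN_S/(2N_B + 1). Then I_CD > I_CS if and only if N_S < N_B/(1 − κ). -/
lemma div_lt_mul_div_iff_lt_mul {α : Type*} [Field α] [LinearOrder α] [IsStrictOrderedRing α]
    {a p q r : α} (ha : 0 < a) (hp : 0 < p) (hr : 0 < r) :
    a / p < a * q / r ↔ r < p * q := by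
  rw [div_eq_mul_one_div a p, mul_div_assoc, mul_lt_mul_iff_right₀ ha,
    div_lt_div_iff₀ hp hr, one_mul, mul_comm]

lemma sub_cd_denominator_eq {R : Type*} [CommRing R] (NS NB κ : R) :
    (2 * NB + 1) * (NS + 1) - (1 + NB + NS * (2 * NB + 2 - κ)) = NB - NS * (1 - κ) := by
  ring

/-- Quantum advantage criterion for entanglement-assisted phase estimation:
`I_CD > I_CS ↔ N_S < N_B/(1-κ)`. -/
theorem qfi_advantage_iff
    (NS NB κ M : ℝ) (hNS : 0 < NS) (hNB : 0 < NB) (hκ0 : 0 < κ) (hκ1 : κ < 1)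
    (hM : 0 < M) :
    4 * M * κ * NS / (2 * NB + 1) <
      4 * M * κ * NS * (NS + 1) / (1 + NB + NS * (2 * NB + 2 - κ)) ↔
    NS < NB / (1 - κ) := by
  have hD : 0 < 1 + NB + NS * (2 * NB + 2 - κ) :=
    add_pos (by linarith) (mul_pos hNS (by linarith))
  rw [div_lt_mul_div_iff_lt_mul (by positivity) (by linarith) hD, lt_div_iff₀ (by linarith),
    ← sub_pos, sub_cd_denominator_eq, sub_pos]
end

section
/- Fix κ ∈ (0, 1), N_B > 0, M > 0. Define I_CD(N_S) = 4MκN_S(N_S+1)/(1 + N_B + N_S(2N_B + 2 − κ)) and I_CS(N_S) = 4MκN_S/(2N_B + 1). Then lim_{N_S → 0⁺} I_CD(N_S)/I_CS(N_S) = (2N_B + 1)/(N_B + 1); in particular this ratio tends to 2 as N_B → ∞. -/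
open Filter Topology

/-! For `N_S > 0` the common factor `4 M κ N_S` cancels, leaving the rational function
`(N_S + 1)(2N_B + 1) / (1 + N_B + N_S (2N_B + 2 − κ))`, which is continuous at `N_S = 0`
with value `(2N_B + 1)/(N_B + 1)`. That value equals `2 − 1/(N_B + 1)`, hence tends to `2`. -/

theorem mul_div_div_div_cancel_left {K : Type*} [Field K] {u : K} (hu : u ≠ 0)
    (p q c : K) : u * p / q / (u / c) = p * c / q := by
  field_simp

theorem tendsto_mul_div_add_mul_nhds_zero {b c d : ℝ} (hd : d ≠ 0) :
    Tendsto (fun x : ℝ => (x + 1) * c / (d + x * b)) (𝓝 0) (𝓝 (c / d)) := by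
  have hcont : ContinuousAt (fun x : ℝ => (x + 1) * c / (d + x * b)) 0 :=
    ContinuousAt.div (by fun_prop) (by fun_prop) (by simpa using hd)
  simpa using hcont.tendsto

theorem tendsto_affine_div_add_const_atTop (a b d : ℝ) :
    Tendsto (fun x : ℝ => (a * x + b) / (x + d)) atTop (𝓝 a) := by
  have hden : Tendsto (fun x : ℝ => x + d) atTop atTop :=
    tendsto_atTop_add_const_right _ d tendsto_id
  have hlim : Tendsto (fun x : ℝ => a + (b - a * d) / (x + d)) atTop (𝓝 (a + 0)) :=
    tendsto_const_nhds.add (tendsto_const_nhds.div_atTop hden)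
  rw [add_zero] at hlim
  refine hlim.congr' ?_
  filter_upwards [eventually_gt_atTop (-d)] with x hx
  field_simp [show x + d ≠ 0 by linarith]
  ring

theorem qfi_ratio_low_brightness_limit_general (κ M : ℝ) (hκ0 : 0 < κ) (hM : 0 < M) :
    (∀ NB : ℝ, 0 < NB →
      Tendsto (fun NS : ℝ =>
          (4 * M * κ * NS * (NS + 1) / (1 + NB + NS * (2 * NB + 2 - κ))) /
            (4 * M * κ * NS / (2 * NB + 1)))
        (nhdsWithin 0 (Set.Ioi 0)) (nhds ((2 * NB + 1) / (NB + 1)))) ∧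
    Tendsto (fun NB : ℝ => (2 * NB + 1) / (NB + 1)) atTop (nhds 2) := by
  refine ⟨fun NB hNB => ?_, tendsto_affine_div_add_const_atTop 2 1 1⟩
  have hlim := tendsto_mul_div_add_mul_nhds_zero (b := 2 * NB + 2 - κ) (c := 2 * NB + 1)
    (show 1 + NB ≠ 0 by linarith)
  rw [add_comm NB 1]
  refine (hlim.mono_left nhdsWithin_le_nhds).congr' ?_
  filter_upwards [self_mem_nhdsWithin] with NS hNS
  rw [mul_div_div_div_cancel_left (by positivity [hNS.out] : 4 * M * κ * NS ≠ 0)]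

/-- As `N_S → 0⁺`, the ratio of C→D to coherent-state quantum Fisher information
tends to `(2N_B+1)/(N_B+1)`; this ratio tends to `2` as `N_B → ∞` (the 3 dB advantage). -/
theorem qfi_ratio_low_brightness_limit (κ M : ℝ) (hκ0 : 0 < κ) (hκ1 : κ < 1) (hM : 0 < M) :
    (∀ NB : ℝ, 0 < NB →
      Tendsto (fun NS : ℝ =>
          (4 * M * κ * NS * (NS + 1) / (1 + NB + NS * (2 * NB + 2 - κ))) /
            (4 * M * κ * NS / (2 * NB + 1)))
        (nhdsWithin 0 (Set.Ioi 0)) (nhds ((2 * NB + 1) / (NB + 1)))) ∧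
    Tendsto (fun NB : ℝ => (2 * NB + 1) / (NB + 1)) atTop (nhds 2) :=
  qfi_ratio_low_brightness_limit_general κ M hκ0 hM
end

section
/- Fix κ ∈ (0, 1), N_S > 0, M > 0. Define I_CD(N_B) = 4MκN_S(N_S+1)/(1 + N_B + N_S(2N_B + 2 − κ)) and I_TMSV(N_B) = 4MκN_S(N_S+1)/(1 + N_B(1 + 2N_S) + N_S(1 − κ)). Then lim_{N_B → ∞} I_CD(N_B)/I_TMSV(N_B) = 1. -/
open Filter Topology

/-! The common prefactor `4 M κ N_S (N_S + 1)` cancels, leaving the ratio of the two denominators.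
Both are affine in `N_B` with the same slope `1 + 2 N_S`, so their ratio tends to `1`. -/

theorem tendsto_affine_div_affine_atTop {p : ℝ} (hp : p ≠ 0) (q r : ℝ) :
    Tendsto (fun x : ℝ => (p * x + q) / (p * x + r)) atTop (𝓝 1) := by
  have hcoeff (s : ℝ) : Tendsto (fun x : ℝ => p + s * x⁻¹) atTop (𝓝 p) := by
    simpa using tendsto_const_nhds.add ((tendsto_inv_atTop_zero (𝕜 := ℝ)).const_mul s)
  have hlim := (hcoeff q).div (hcoeff r) hp
  rw [div_self hp] at hlim
  refine hlim.congr' ?_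
  filter_upwards [eventually_ne_atTop 0] with x hx
  rw [Pi.div_apply, ← mul_div_mul_right _ _ hx]
  congr 1 <;> field_simp

theorem cd_receiver_asymptotically_optimal_general
    (κ NS M : ℝ) (hκ0 : 0 < κ) (hNS : 0 < NS) (hM : 0 < M) :
    Tendsto (fun NB : ℝ =>
        (4 * M * κ * NS * (NS + 1) / (1 + NB + NS * (2 * NB + 2 - κ))) /
          (4 * M * κ * NS * (NS + 1) / (1 + NB * (1 + 2 * NS) + NS * (1 - κ))))
      atTop (nhds 1) := by
  have hprefactor : 4 * M * κ * NS * (NS + 1) ≠ 0 := by positivity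
  have hslope : 1 + 2 * NS ≠ 0 := by positivity
  refine (tendsto_affine_div_affine_atTop hslope (1 + NS * (1 - κ)) (1 + NS * (2 - κ))).congr
    fun NB => ?_
  rw [div_div_div_cancel_left' _ _ hprefactor]
  congr 1 <;> ring

/-- In the high-noise limit `N_B → ∞`, the C→D Fisher information attains the
TMSV quantum Fisher information: `I_CD(N_B)/I_TMSV(N_B) → 1`. -/
theorem cd_receiver_asymptotically_optimal
    (κ NS M : ℝ) (hκ0 : 0 < κ) (hκ1 : κ < 1) (hNS : 0 < NS) (hM : 0 < M) :
    Tendsto (fun NB : ℝ =>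
        (4 * M * κ * NS * (NS + 1) / (1 + NB + NS * (2 * NB + 2 - κ))) /
          (4 * M * κ * NS * (NS + 1) / (1 + NB * (1 + 2 * NS) + NS * (1 - κ))))
      atTop (nhds 1) :=
  cd_receiver_asymptotically_optimal_general κ NS M hκ0 hNS hM
end

section
/- Let g(n) = (n+1)·log₂(n+1) − n·log₂(n). Fix κ ∈ (0,1), N_B > 0, and define N_S′ = κN_S + N_B, D = √((N_S + N_S′ + 1)² − 4κN_S(N_S+1)), A_± = (D − 1 ± (N_S′ − N_S))/2, and C_E(N_S) = g(N_S) + g(N_S′) − g(A₊) − g(A₋). Then lim_{N_S → 0⁺} C_E(N_S)/(N_S·ln(1/N_S)) = κ/((N_B + 1)·ln 2). -/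
open Filter

noncomputable def thermalEntropy (n : ℝ) : ℝ :=
  if n = 0 then 0 else (n + 1) * Real.logb 2 (n + 1) - n * Real.logb 2 n

open Real Topology Asymptotics

/-!
Measured in nats, `g x = negMulLog x - negMulLog (x + 1)`. The second term is differentiable at `0`
and vanishes there, so it is `O(x) = o(x log (1/x))`, whereas `negMulLog (f x) ~ c · x log (1/x)`
whenever `f x / x → c > 0`. Hence `g (f x) ~ c · x log (1/x)` for `f 0 = 0`, `f' 0 = c > 0`.
As `N_S → 0`, `A₋ = (1 - κ/(N_B + 1)) N_S + o(N_S)`, while `g(N_S') - g(A₊)` is a differentiable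
function of `N_S` vanishing at `0` (both arguments tend to `N_B > 0`), hence `O(N_S)`. So
`C_E · ln 2 / (N_S ln (1/N_S)) → 1 - (1 - κ/(N_B + 1)) + 0`.
-/

noncomputable def thermalEntropyNats (x : ℝ) : ℝ := negMulLog x - negMulLog (x + 1)

lemma thermalEntropy_eq_div_log_two (x : ℝ) :
    thermalEntropy x = thermalEntropyNats x / log 2 := by
  rcases eq_or_ne x 0 with rfl | hx
  · simp [thermalEntropy, thermalEntropyNats]
  · simp only [thermalEntropy, hx, if_false, thermalEntropyNats, negMulLog, logb]
    ring

lemma differentiableAt_thermalEntropyNats {x : ℝ} (hx : 0 < x) :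
    DifferentiableAt ℝ thermalEntropyNats x :=
  (differentiableAt_negMulLog_iff.mpr hx.ne').sub
    ((differentiableAt_negMulLog_iff.mpr (by linarith)).comp x
      (differentiableAt_id.add_const 1))

lemma tendsto_inv_log_nhdsGT_zero : Tendsto (fun x : ℝ => (log x)⁻¹) (𝓝[>] 0) (𝓝 0) :=
  tendsto_inv_atBot_zero.comp tendsto_log_nhdsGT_zero

lemma isLittleO_id_negMulLog : (fun x : ℝ => x) =o[𝓝[>] 0] negMulLog := by
  have hlog : (fun _ => (1 : ℝ)) =o[𝓝[>] 0] fun x => -log x :=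
    (isLittleO_one_left_iff ℝ).mpr <| tendsto_norm_atTop_atTop.comp <|
      tendsto_neg_atBot_atTop.comp tendsto_log_nhdsGT_zero
  refine ((isBigO_refl (fun x : ℝ => x) _).mul_isLittleO hlog).congr (fun x => mul_one x) ?_
  simp [negMulLog]

lemma tendsto_div_negMulLog_of_differentiableAt {φ : ℝ → ℝ} (hφ : DifferentiableAt ℝ φ 0)
    (h0 : φ 0 = 0) : Tendsto (fun x => φ x / negMulLog x) (𝓝[>] 0) (𝓝 0) := by
  have hO : φ =O[𝓝[>] 0] fun x => x := by
    simpa [h0] using hφ.isBigO_sub.mono nhdsWithin_le_nhds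
  exact (hO.trans_isLittleO isLittleO_id_negMulLog).tendsto_div_nhds_zero

lemma tendsto_negMulLog_comp_div_negMulLog {f : ℝ → ℝ} {c : ℝ} (hc : 0 < c)
    (hf : Tendsto (fun x => f x / x) (𝓝[>] 0) (𝓝 c)) :
    Tendsto (fun x => negMulLog (f x) / negMulLog x) (𝓝[>] 0) (𝓝 c) := by
  have hlog : Tendsto (fun x => log (f x / x) * (log x)⁻¹ + 1) (𝓝[>] 0) (𝓝 1) := by
    simpa using (((continuousAt_log hc.ne').tendsto.comp hf).mul
      tendsto_inv_log_nhdsGT_zero).add_const 1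
  refine (mul_one c ▸ hf.mul hlog).congr' ?_
  filter_upwards [hf.eventually_ne hc.ne', self_mem_nhdsWithin,
    tendsto_log_nhdsGT_zero.eventually_ne_atBot 0] with x hfx hxpos hlogx
  have hx : x ≠ 0 := ne_of_gt hxpos
  rw [log_div (div_ne_zero_iff.mp hfx).1 hx, negMulLog, negMulLog]
  field_simp
  ring

lemma tendsto_thermalEntropyNats_comp_div_negMulLog {f : ℝ → ℝ} {c : ℝ} (hc : 0 < c)
    (hf : HasDerivAt f c 0) (hf0 : f 0 = 0) :
    Tendsto (fun x => thermalEntropyNats (f x) / negMulLog x) (𝓝[>] 0) (𝓝 c) := by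
  have hslope : Tendsto (fun x => f x / x) (𝓝[>] 0) (𝓝 c) := by
    simpa [hf0, div_eq_inv_mul] using hf.tendsto_slope_zero_right
  have hshift : Tendsto (fun x => negMulLog (f x + 1) / negMulLog x) (𝓝[>] 0) (𝓝 0) := by
    refine tendsto_div_negMulLog_of_differentiableAt ?_ (by simp [hf0])
    exact (differentiableAt_negMulLog_iff.mpr (by simp [hf0])).comp 0
      (hf.differentiableAt.add_const 1)
  simpa [thermalEntropyNats, sub_div] using
    (tendsto_negMulLog_comp_div_negMulLog hc hslope).sub hshift

section ThermalLoss

variable {κ NB : ℝ}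

/-- `√(lossRadicand κ NB N_S)` is the paper's `D`, and `occupationPlus`, `occupationMinus` are
`A₊`, `A₋`. -/
def lossRadicand (κ NB t : ℝ) : ℝ := (t + (κ * t + NB) + 1) ^ 2 - 4 * κ * t * (t + 1)

noncomputable def occupationPlus (κ NB t : ℝ) : ℝ :=
  (√(lossRadicand κ NB t) - 1 + ((κ * t + NB) - t)) / 2

noncomputable def occupationMinus (κ NB t : ℝ) : ℝ :=
  (√(lossRadicand κ NB t) - 1 - ((κ * t + NB) - t)) / 2

lemma sqrt_lossRadicand_zero (hNB : -1 < NB) : √(lossRadicand κ NB 0) = NB + 1 := by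
  rw [show lossRadicand κ NB 0 = (NB + 1) ^ 2 by simp [lossRadicand]]
  exact sqrt_sq (by linarith)

lemma occupationPlus_zero (hNB : -1 < NB) : occupationPlus κ NB 0 = NB := by
  simp only [occupationPlus, sqrt_lossRadicand_zero hNB]
  ring

lemma occupationMinus_zero (hNB : -1 < NB) : occupationMinus κ NB 0 = 0 := by
  simp only [occupationMinus, sqrt_lossRadicand_zero hNB]
  ring

lemma hasDerivAt_sqrt_lossRadicand (hNB : -1 < NB) :
    HasDerivAt (fun t => √(lossRadicand κ NB t)) (1 + κ - 2 * κ / (NB + 1)) 0 := by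
  have hR : HasDerivAt (lossRadicand κ NB) (2 * (NB + 1) * (1 + κ) - 4 * κ) 0 := by
    have hsum :=
      ((hasDerivAt_id (0 : ℝ)).add (((hasDerivAt_id 0).const_mul κ).add_const NB)).add_const 1
    have hprod := ((hasDerivAt_id (0 : ℝ)).const_mul (4 * κ)).mul ((hasDerivAt_id 0).add_const 1)
    exact ((hsum.pow 2).sub hprod).congr_deriv (by simp)
  have hNB1 : NB + 1 ≠ 0 := by linarith
  have hR0 : lossRadicand κ NB 0 ≠ 0 := by simp [lossRadicand, hNB1]
  refine (hR.sqrt hR0).congr_deriv ?_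
  rw [sqrt_lossRadicand_zero hNB]
  field_simp
  ring

lemma hasDerivAt_occupationMinus (hNB : -1 < NB) :
    HasDerivAt (occupationMinus κ NB) (1 - κ / (NB + 1)) 0 := by
  have hdiff := ((hasDerivAt_id (0 : ℝ)).const_mul κ).add_const NB |>.sub (hasDerivAt_id 0)
  exact ((((hasDerivAt_sqrt_lossRadicand hNB).sub_const 1).sub hdiff).div_const 2).congr_deriv
    (by ring)

lemma differentiableAt_occupationPlus (hNB : -1 < NB) :
    DifferentiableAt ℝ (occupationPlus κ NB) 0 :=
  ((((hasDerivAt_sqrt_lossRadicand hNB).sub_const 1).add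
    ((((hasDerivAt_id 0).const_mul κ).add_const NB).sub (hasDerivAt_id 0))).div_const
      2).differentiableAt

end ThermalLoss

theorem ea_capacity_low_brightness_scaling_general (κ NB : ℝ) (hκ1 : κ < 1)
    (hNB : 0 < NB) :
    Tendsto (fun NS : ℝ =>
        (thermalEntropy NS + thermalEntropy (κ * NS + NB)
          - thermalEntropy ((Real.sqrt ((NS + (κ * NS + NB) + 1) ^ 2
              - 4 * κ * NS * (NS + 1)) - 1 + ((κ * NS + NB) - NS)) / 2)
          - thermalEntropy ((Real.sqrt ((NS + (κ * NS + NB) + 1) ^ 2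
              - 4 * κ * NS * (NS + 1)) - 1 - ((κ * NS + NB) - NS)) / 2))
        / (NS * Real.log (1 / NS)))
      (nhdsWithin 0 (Set.Ioi 0)) (nhds (κ / ((NB + 1) * Real.log 2))) := by
  have hNB' : -1 < NB := by linarith
  have hc : 0 < 1 - κ / (NB + 1) := sub_pos.mpr ((div_lt_one (by linarith)).mpr (by linarith))
  have hsignal := tendsto_thermalEntropyNats_comp_div_negMulLog one_pos (hasDerivAt_id 0) rfl
  have hminus := tendsto_thermalEntropyNats_comp_div_negMulLog hc
    (hasDerivAt_occupationMinus hNB') (occupationMinus_zero hNB')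
  have houtput : Tendsto (fun t => (thermalEntropyNats (κ * t + NB)
      - thermalEntropyNats (occupationPlus κ NB t)) / negMulLog t) (𝓝[>] 0) (𝓝 0) := by
    refine tendsto_div_negMulLog_of_differentiableAt (DifferentiableAt.sub ?_ ?_)
      (by simp [occupationPlus_zero hNB'])
    · exact (differentiableAt_thermalEntropyNats (by simpa using hNB)).comp 0
        ((differentiableAt_id.const_mul κ).add_const NB)
    · exact (differentiableAt_thermalEntropyNats (by rwa [occupationPlus_zero hNB'])).comp 0
        (differentiableAt_occupationPlus hNB')
  convert ((hsignal.sub hminus).add houtput).div_const (log 2) using 2 with t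
  · simp only [thermalEntropy_eq_div_log_two, one_div, log_inv, negMulLog, id]
    unfold occupationPlus occupationMinus lossRadicand
    ring
  · field_simp
    ring

/-- The entanglement-assisted capacity `C_E(N_S)` of the thermal-loss channel
satisfies `C_E(N_S)/(N_S ln(1/N_S)) → κ/((N_B+1) ln 2)` as `N_S → 0⁺`. -/
theorem ea_capacity_low_brightness_scaling (κ NB : ℝ) (hκ0 : 0 < κ) (hκ1 : κ < 1)
    (hNB : 0 < NB) :
    Tendsto (fun NS : ℝ =>
        (thermalEntropy NS + thermalEntropy (κ * NS + NB)
          - thermalEntropy ((Real.sqrt ((NS + (κ * NS + NB) + 1) ^ 2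
              - 4 * κ * NS * (NS + 1)) - 1 + ((κ * NS + NB) - NS)) / 2)
          - thermalEntropy ((Real.sqrt ((NS + (κ * NS + NB) + 1) ^ 2
              - 4 * κ * NS * (NS + 1)) - 1 - ((κ * NS + NB) - NS)) / 2))
        / (NS * Real.log (1 / NS)))
      (nhdsWithin 0 (Set.Ioi 0)) (nhds (κ / ((NB + 1) * Real.log 2))) :=
  ea_capacity_low_brightness_scaling_general κ NB hκ1 hNB
end

section
/- With g, C, and C_E as in the capacity formulas for the thermal-loss channel Φ_{κ,0} (C = g(κN_S + N_B) − g(N_B) and C_E = g(N_S) + g(N_S′) − g(A₊) − g(A₋) with N_S′ = κN_S + N_B, D = √((N_S + N_S′ + 1)² − 4κN_S(N_S+1)), A_± = (D − 1 ± (N_S′ − N_S))/2), for any fixed κ ∈ (0,1) and N_B > 0 the ratio C_E(N_S)/C(N_S) tends to +∞ as N_S → 0⁺. -/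
open Filter

/-!
Write `g(y) = (y + 1) log₂ (y + 1) - y log₂ y`. The capacity `C(N_S) = g(κ N_S + N_B) - g(N_B)` is
differentiable at `0` with `C'(0) = κ g'(N_B) > 0`. In `C_E` every term is smooth at `N_S = 0`
except the parts `- y log₂ y` of `g(N_S)` and of `g(A₋)`, since `A₋ → 0`. Rationalizing gives
`A₋ = N_S u(N_S)` with `u(0) = 1 - κ / (N_B + 1) ∈ (0, 1)`, so these two parts contribute
`(1 - u) N_S log₂ (1 / N_S) + O(N_S)`. Hence `C_E / N_S → ∞` while `C / N_S → C'(0)`.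
-/

open Topology Real

lemma thermalEntropy_eq (n : ℝ) :
    thermalEntropy n = (n + 1) * logb 2 (n + 1) - n * logb 2 n := by
  unfold thermalEntropy
  split_ifs with h <;> simp [h]

lemma differentiableAt_add_one_mul_logb {y : ℝ} (hy : -1 < y) :
    DifferentiableAt ℝ (fun z : ℝ => (z + 1) * logb 2 (z + 1)) y := by
  simp only [logb]
  fun_prop (disch := linarith)

lemma hasDerivAt_thermalEntropy {x : ℝ} (hx : 0 < x) :
    HasDerivAt thermalEntropy (logb 2 ((x + 1) / x)) x := by
  have hshift : HasDerivAt (fun y : ℝ => (y + 1) * log (y + 1)) (log (x + 1) + 1) x := by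
    simpa [Function.comp_def] using
      (hasDerivAt_mul_log (x := x + 1) (by linarith)).comp x ((hasDerivAt_id x).add_const 1)
  have h := (hshift.sub (hasDerivAt_mul_log hx.ne')).div_const (log 2)
  rw [show (log (x + 1) + 1 - (log x + 1)) / log 2 = logb 2 ((x + 1) / x) by
    rw [logb, log_div (by linarith) hx.ne']; ring] at h
  have hformula : (fun y => ((y + 1) * log (y + 1) - y * log y) / log 2) = thermalEntropy := by
    funext y
    rw [thermalEntropy_eq, logb, logb]
    ring
  rw [← hformula]
  exact h

lemma HasDerivAt.tendsto_div_self_nhdsGT_zero {f : ℝ → ℝ} {f' : ℝ} (hf : HasDerivAt f f' 0)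
    (h0 : f 0 = 0) : Tendsto (fun x => f x / x) (𝓝[>] 0) (𝓝 f') := by
  simpa [h0, div_eq_inv_mul] using hf.tendsto_slope_zero_right

/-- The quotient equals `u logb u + (u - 1) logb x`, and `u - 1 → c - 1 < 0`. -/
lemma tendsto_mul_logb_mul_sub_div_atTop {b c : ℝ} {u : ℝ → ℝ} (hb : 1 < b) (hc0 : 0 < c)
    (hc1 : c < 1) (hu : Tendsto u (𝓝[>] 0) (𝓝 c)) :
    Tendsto (fun x => (x * u x * logb b (x * u x) - x * logb b x) / x) (𝓝[>] 0) atTop := by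
  have hbounded : Tendsto (fun x => u x * logb b (u x)) (𝓝[>] 0) (𝓝 (c * logb b c)) :=
    hu.mul (((continuousAt_log hc0.ne').div_const (log b)).tendsto.comp hu)
  have hsingular : Tendsto (fun x => (u x - 1) * logb b x) (𝓝[>] 0) atTop :=
    (hu.sub_const 1).neg_mul_atBot (by linarith) (tendsto_logb_nhdsGT_zero hb)
  refine (hbounded.add_atTop hsingular).congr' ?_
  filter_upwards [self_mem_nhdsWithin, hu.eventually (lt_mem_nhds hc0)] with x hx hux
  have hx0 : x ≠ 0 := ne_of_gt hx
  rw [logb_mul hx0 hux.ne']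
  field_simp
  ring

lemma Filter.Tendsto.div_atTop_of_div {α : Type*} {l : Filter α} {f g h : α → ℝ} {L : ℝ}
    (hf : Tendsto (fun x => f x / h x) l atTop) (hg : Tendsto (fun x => g x / h x) l (𝓝 L))
    (hL : 0 < L) (hh : ∀ᶠ x in l, h x ≠ 0) : Tendsto (fun x => f x / g x) l atTop := by
  refine (hf.atTop_mul_pos (inv_pos.2 hL) (hg.inv₀ hL.ne')).congr' ?_
  filter_upwards [hh] with x hx
  rw [inv_div, div_mul_div_cancel₀ hx]

lemma sqrt_sq_add_sub_self {t s : ℝ} (ht : 0 < t) (hs : 0 ≤ t ^ 2 + s) :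
    √(t ^ 2 + s) - t = s / (√(t ^ 2 + s) + t) := by
  have hpos : 0 < √(t ^ 2 + s) + t := by positivity
  rw [eq_div_iff hpos.ne']
  nlinarith [sq_sqrt hs]

namespace ThermalLoss

variable (κ NB : ℝ)

noncomputable def D (x : ℝ) : ℝ := √((x + (κ * x + NB) + 1) ^ 2 - 4 * κ * x * (x + 1))

noncomputable def Aplus (x : ℝ) : ℝ := (D κ NB x - 1 + ((κ * x + NB) - x)) / 2

noncomputable def Aminus (x : ℝ) : ℝ := (D κ NB x - 1 - ((κ * x + NB) - x)) / 2

noncomputable def capacity (x : ℝ) : ℝ := thermalEntropy (κ * x + NB) - thermalEntropy NB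

noncomputable def eaCapacity (x : ℝ) : ℝ :=
  thermalEntropy x + thermalEntropy (κ * x + NB) - thermalEntropy (Aplus κ NB x)
    - thermalEntropy (Aminus κ NB x)

/-- `A₋(x) / x`, obtained by rationalizing `A₋ = (D - t) / 2` with `t = 1 + N_B - (1 - κ) x`,
since `D² = t² + 4 (N_B + 1 - κ) x`. -/
noncomputable def AminusSlope (x : ℝ) : ℝ :=
  2 * (NB + 1 - κ) / (D κ NB x + (1 + NB + (κ - 1) * x))

lemma D_eq (x : ℝ) :
    D κ NB x = √((1 + NB + (κ - 1) * x) ^ 2 + 4 * (NB + 1 - κ) * x) := by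
  rw [D]; ring_nf

variable {κ NB}

lemma D_zero (hNB : -1 < NB) : D κ NB 0 = NB + 1 := by
  rw [D_eq, mul_zero, mul_zero, add_zero, add_zero, sqrt_sq (by linarith)]
  ring

lemma Aplus_zero (hNB : -1 < NB) : Aplus κ NB 0 = NB := by
  rw [Aplus, D_zero hNB]; ring

lemma Aminus_zero (hNB : -1 < NB) : Aminus κ NB 0 = 0 := by
  rw [Aminus, D_zero hNB]; ring

lemma differentiableAt_D_zero (hNB : -1 < NB) : DifferentiableAt ℝ (D κ NB) 0 := by
  have hradicand : (0 + (κ * 0 + NB) + 1) ^ 2 - 4 * κ * 0 * (0 + 1) ≠ 0 := by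
    ring_nf; nlinarith
  unfold D
  fun_prop (disch := exact hradicand)

lemma eventually_Aminus_eq_mul_slope (hNB : -1 < NB) :
    ∀ᶠ x in 𝓝 0, Aminus κ NB x = x * AminusSlope κ NB x := by
  have ht : ∀ᶠ x in 𝓝 (0 : ℝ), 0 < 1 + NB + (κ - 1) * x :=
    continuousAt_const.eventually_lt (by fun_prop) (by simp; linarith)
  have hrad : ∀ᶠ x in 𝓝 (0 : ℝ), 0 < (1 + NB + (κ - 1) * x) ^ 2 + 4 * (NB + 1 - κ) * x :=
    continuousAt_const.eventually_lt (by fun_prop) (by simp; nlinarith)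
  filter_upwards [ht, hrad] with x ht hrad
  rw [Aminus, AminusSlope, D_eq]
  linear_combination sqrt_sq_add_sub_self ht hrad.le / 2

lemma tendsto_AminusSlope (hNB : -1 < NB) :
    Tendsto (AminusSlope κ NB) (𝓝 0) (𝓝 (1 - κ / (NB + 1))) := by
  have hden : D κ NB 0 + (1 + NB + (κ - 1) * 0) = 2 * (NB + 1) := by rw [D_zero hNB]; ring
  have hcont : ContinuousAt (AminusSlope κ NB) 0 := by
    have := (differentiableAt_D_zero (κ := κ) hNB).continuousAt
    unfold AminusSlope
    fun_prop (disch := rw [hden]; linarith)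
  convert hcont.tendsto using 2
  have : NB + 1 ≠ 0 := by linarith
  rw [AminusSlope, hden]
  field_simp

lemma tendsto_capacity_div_self (hNB : 0 < NB) :
    Tendsto (fun x => capacity κ NB x / x) (𝓝[>] 0) (𝓝 (logb 2 ((NB + 1) / NB) * κ)) := by
  have hinner : HasDerivAt (fun x : ℝ => κ * x + NB) κ 0 := by
    simpa using ((hasDerivAt_id (0 : ℝ)).const_mul κ).add_const NB
  refine HasDerivAt.tendsto_div_self_nhdsGT_zero ?_ (by simp [capacity])
  exact ((hasDerivAt_thermalEntropy hNB).comp_of_eq 0 hinner (by simp)).sub_const _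

lemma tendsto_eaCapacity_div_self_atTop (hκ0 : 0 < κ) (hκ1 : κ < 1) (hNB : 0 < NB) :
    Tendsto (fun x => eaCapacity κ NB x / x) (𝓝[>] 0) atTop := by
  have hNB' : -1 < NB := by linarith
  set p : ℝ → ℝ := fun y => (y + 1) * logb 2 (y + 1)
  -- `eaCapacity` minus the terms `- y logb y` of `g(x)` and `g(A₋ x)`, the only singular ones
  set E : ℝ → ℝ := fun x =>
    p x + thermalEntropy (κ * x + NB) - thermalEntropy (Aplus κ NB x) - p (Aminus κ NB x)
  have hEdiff : DifferentiableAt ℝ E 0 := by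
    have hg : DifferentiableAt ℝ thermalEntropy NB :=
      (hasDerivAt_thermalEntropy hNB).differentiableAt
    have hp0 : DifferentiableAt ℝ p 0 := differentiableAt_add_one_mul_logb (by norm_num)
    have hD := differentiableAt_D_zero (κ := κ) hNB'
    refine ((hp0.add ?_).sub ?_).sub ?_
    · exact (show DifferentiableAt ℝ thermalEntropy (κ * 0 + NB) by simpa using hg).comp
        (f := fun x => κ * x + NB) 0 (by fun_prop)
    · exact (show DifferentiableAt ℝ thermalEntropy (Aplus κ NB 0) by rwa [Aplus_zero hNB']).comp 0
        (by unfold Aplus; fun_prop)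
    · exact (show DifferentiableAt ℝ p (Aminus κ NB 0) by rwa [Aminus_zero hNB']).comp 0
        (by unfold Aminus; fun_prop)
  have hE0 : E 0 = 0 := by simp [E, p, Aplus_zero hNB', Aminus_zero hNB']
  have hc0 : 0 < 1 - κ / (NB + 1) := by
    rw [sub_pos, div_lt_one (by linarith)]; linarith
  have hc1 : 1 - κ / (NB + 1) < 1 := by
    have : 0 < κ / (NB + 1) := by positivity
    linarith
  have hsingular := tendsto_mul_logb_mul_sub_div_atTop one_lt_two hc0 hc1
    ((tendsto_AminusSlope hNB').mono_left nhdsWithin_le_nhds)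
  refine ((hEdiff.hasDerivAt.tendsto_div_self_nhdsGT_zero hE0).add_atTop hsingular).congr' ?_
  filter_upwards [nhdsWithin_le_nhds (eventually_Aminus_eq_mul_slope (κ := κ) hNB')] with x hA
  rw [← add_div]
  congr 1
  simp only [E, p, eaCapacity, thermalEntropy_eq, hA]
  ring

end ThermalLoss

/-- The entanglement-assisted capacity advantage `C_E(N_S)/C(N_S)` over the
unassisted capacity grows without bound as the signal brightness `N_S → 0⁺`. -/
theorem ea_advantage_diverges (κ NB : ℝ) (hκ0 : 0 < κ) (hκ1 : κ < 1) (hNB : 0 < NB) :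
    Tendsto (fun NS : ℝ =>
        (thermalEntropy NS + thermalEntropy (κ * NS + NB)
          - thermalEntropy ((Real.sqrt ((NS + (κ * NS + NB) + 1) ^ 2
              - 4 * κ * NS * (NS + 1)) - 1 + ((κ * NS + NB) - NS)) / 2)
          - thermalEntropy ((Real.sqrt ((NS + (κ * NS + NB) + 1) ^ 2
              - 4 * κ * NS * (NS + 1)) - 1 - ((κ * NS + NB) - NS)) / 2))
        / (thermalEntropy (κ * NS + NB) - thermalEntropy NB))
      (nhdsWithin 0 (Set.Ioi 0)) atTop := by
  have hL : 0 < logb 2 ((NB + 1) / NB) * κ :=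
    mul_pos (logb_pos one_lt_two (by rw [lt_div_iff₀ hNB]; linarith)) hκ0
  exact (ThermalLoss.tendsto_eaCapacity_div_self_atTop hκ0 hκ1 hNB).div_atTop_of_div
    (ThermalLoss.tendsto_capacity_div_self hNB) hL
    (eventually_mem_nhdsWithin.mono fun x hx => ne_of_gt hx)
end

section
/- Let B > 1 and define Λ_s(B) = ((B+1)^s + (B−1)^s)/((B+1)^s − (B−1)^s) for s ∈ (0,1). The function f(s) = 1/(Λ_s(B) + Λ_{1−s}(B)) is strictly concave on (0,1) and symmetric about s = 1/2; consequently f attains its maximum at s = 1/2, i.e., Λ_s(B) + Λ_{1−s}(B) ≥ 2Λ_{1/2}(B) for all s ∈ (0,1). -/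
/-!
With `L = log (a / c)`, the ratio `(a^t + c^t) / (a^t - c^t)` is `coth (t L / 2)`, and the addition
formula for `sinh` gives `coth x + coth y = sinh (x + y) / (sinh x sinh y)`. For `x = s L / 2`,
`y = (1 - s) L / 2` the product `2 sinh x sinh y = cosh (L / 2) - cosh ((s - 1/2) L)`, so
`(Λ_s + Λ_{1-s})⁻¹ = (cosh (L / 2) - cosh ((s - 1/2) L)) / (2 sinh (L / 2))`. This is strictly
concave by strict convexity of `cosh`, and largest at `s = 1/2` where `cosh` is smallest.
-/

open Real Set

/-- `powRatio (B + 1) (B - 1) s` is the paper's `Λ_s(B)`. -/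
noncomputable def powRatio (a c t : ℝ) : ℝ := (a ^ t + c ^ t) / (a ^ t - c ^ t)

lemma strictConvexOn_cosh : StrictConvexOn ℝ univ cosh :=
  strictConvexOn_of_deriv2_pos convex_univ continuous_cosh.continuousOn fun x _ => by
    simpa [Real.deriv_cosh] using cosh_pos x

lemma strictConcaveOn_sub_cosh_mul_add_div {c : ℝ} (hc : c ≠ 0) (a b : ℝ) {k : ℝ} (hk : 0 < k) :
    StrictConcaveOn ℝ univ fun x => (b - cosh (c * x + a)) / k := by
  refine ⟨convex_univ, fun x _ y _ hxy α β hα hβ hαβ => ?_⟩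
  have hne : c * x + a ≠ c * y + a := by simpa [hc] using hxy
  have hlt := strictConvexOn_cosh.2 (mem_univ _) (mem_univ _) hne hα hβ hαβ
  have hcomb : α • (c * x + a) + β • (c * y + a) = c * (α • x + β • y) + a := by
    simp only [smul_eq_mul]; linear_combination a * hαβ
  rw [hcomb] at hlt
  simp only [smul_eq_mul] at hlt ⊢
  obtain rfl : β = 1 - α := by linarith
  have := div_lt_div_of_pos_right hlt hk
  linear_combination this

lemma cosh_div_sinh_add_cosh_div_sinh {x y : ℝ} (hx : sinh x ≠ 0) (hy : sinh y ≠ 0) :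
    cosh x / sinh x + cosh y / sinh y = sinh (x + y) / (sinh x * sinh y) := by
  rw [sinh_add, div_add_div _ _ hx hy]; ring

lemma two_mul_sinh_mul_sinh (x y : ℝ) : 2 * (sinh x * sinh y) = cosh (x + y) - cosh (x - y) := by
  rw [cosh_add, cosh_sub]; ring

lemma powRatio_eq_cosh_div_sinh {a c : ℝ} (ha : 0 < a) (hc : 0 < c) (t : ℝ) :
    powRatio a c t = cosh (t * log (a / c) / 2) / sinh (t * log (a / c) / 2) := by
  have hat : a ^ t = exp (t * (log a + log c) / 2) * exp (t * log (a / c) / 2) := by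
    rw [← exp_add, rpow_def_of_pos ha, log_div ha.ne' hc.ne']; ring_nf
  have hct : c ^ t = exp (t * (log a + log c) / 2) * exp (-(t * log (a / c) / 2)) := by
    rw [← exp_add, rpow_def_of_pos hc, log_div ha.ne' hc.ne']; ring_nf
  rw [powRatio, hat, hct, cosh_eq, sinh_eq, ← mul_add, ← mul_sub,
    mul_div_mul_left _ _ (exp_ne_zero _), div_div_div_cancel_right₀ two_ne_zero]

section
variable {a c : ℝ} (hc : 0 < c) (hca : c < a)
include hc hca

lemma log_div_pos : 0 < log (a / c) := log_pos ((one_lt_div hc).2 hca)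

lemma sinh_mul_log_div_pos {t : ℝ} (ht : 0 < t) : 0 < sinh (t * log (a / c) / 2) :=
  sinh_pos_iff.2 (by have := log_div_pos hc hca; positivity)

lemma sinh_half_log_div_pos : 0 < sinh (log (a / c) / 2) := by
  simpa using sinh_mul_log_div_pos hc hca one_pos

lemma powRatio_add_powRatio_one_sub {s : ℝ} (hs : s ∈ Ioo 0 1) :
    powRatio a c s + powRatio a c (1 - s) = sinh (log (a / c) / 2)
      / (sinh (s * log (a / c) / 2) * sinh ((1 - s) * log (a / c) / 2)) := by
  rw [powRatio_eq_cosh_div_sinh (hc.trans hca) hc, powRatio_eq_cosh_div_sinh (hc.trans hca) hc,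
    cosh_div_sinh_add_cosh_div_sinh (sinh_mul_log_div_pos hc hca hs.1).ne'
      (sinh_mul_log_div_pos hc hca (sub_pos.2 hs.2)).ne']
  ring_nf

lemma powRatio_add_powRatio_one_sub_pos {s : ℝ} (hs : s ∈ Ioo 0 1) :
    0 < powRatio a c s + powRatio a c (1 - s) := by
  rw [powRatio_add_powRatio_one_sub hc hca hs]
  exact div_pos (sinh_half_log_div_pos hc hca)
    (mul_pos (sinh_mul_log_div_pos hc hca hs.1) (sinh_mul_log_div_pos hc hca (sub_pos.2 hs.2)))

lemma inv_powRatio_add_powRatio_one_sub {s : ℝ} (hs : s ∈ Ioo 0 1) :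
    (powRatio a c s + powRatio a c (1 - s))⁻¹ = (cosh (log (a / c) / 2)
      - cosh (log (a / c) * s + -(log (a / c) / 2))) / (2 * sinh (log (a / c) / 2)) := by
  have h := two_mul_sinh_mul_sinh (s * log (a / c) / 2) ((1 - s) * log (a / c) / 2)
  rw [show s * log (a / c) / 2 + (1 - s) * log (a / c) / 2 = log (a / c) / 2 by ring,
    show s * log (a / c) / 2 - (1 - s) * log (a / c) / 2
      = log (a / c) * s + -(log (a / c) / 2) by ring] at h
  rw [powRatio_add_powRatio_one_sub hc hca hs, inv_div, ← h, mul_div_mul_left _ _ two_ne_zero]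

lemma strictConcaveOn_inv_powRatio_add_powRatio_one_sub :
    StrictConcaveOn ℝ (Ioo 0 1) fun s => (powRatio a c s + powRatio a c (1 - s))⁻¹ :=
  ((strictConcaveOn_sub_cosh_mul_add_div (log_div_pos hc hca).ne' _ _
    (mul_pos two_pos (sinh_half_log_div_pos hc hca))).subset (subset_univ _)
    (convex_Ioo 0 1)).congr fun _ hs => (inv_powRatio_add_powRatio_one_sub hc hca hs).symm

lemma two_mul_powRatio_half_le {s : ℝ} (hs : s ∈ Ioo 0 1) :
    2 * powRatio a c (1 / 2) ≤ powRatio a c s + powRatio a c (1 - s) := by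
  have hhalf : (1 / 2 : ℝ) ∈ Ioo 0 1 := by norm_num
  have hsum_half : 2 * powRatio a c (1 / 2) = powRatio a c (1 / 2) + powRatio a c (1 - 1 / 2) := by
    norm_num [two_mul]
  rw [hsum_half, ← inv_le_inv₀ (powRatio_add_powRatio_one_sub_pos hc hca hs)
    (powRatio_add_powRatio_one_sub_pos hc hca hhalf), inv_powRatio_add_powRatio_one_sub hc hca hs,
    inv_powRatio_add_powRatio_one_sub hc hca hhalf]
  have := sinh_half_log_div_pos hc hca
  gcongr
  rw [show log (a / c) * (1 / 2) + -(log (a / c) / 2) = 0 by ring, cosh_zero]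
  exact one_le_cosh _

end

/-- For `B > 1` and `Λ_s(B) = ((B+1)^s + (B−1)^s)/((B+1)^s − (B−1)^s)`, the
function `f(s) = 1/(Λ_s(B) + Λ_{1−s}(B))` is strictly concave on `(0,1)` and
symmetric about `s = 1/2`; hence `Λ_s(B) + Λ_{1−s}(B) ≥ 2Λ_{1/2}(B)`. -/
theorem chernoff_exponent_symmetric_concave (B : ℝ) (hB : 1 < B) :
    (StrictConcaveOn ℝ (Set.Ioo (0 : ℝ) 1)
      (fun s : ℝ =>
        (((B + 1) ^ s + (B - 1) ^ s) / ((B + 1) ^ s - (B - 1) ^ s)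
          + ((B + 1) ^ (1 - s) + (B - 1) ^ (1 - s))
            / ((B + 1) ^ (1 - s) - (B - 1) ^ (1 - s)))⁻¹)) ∧
    (∀ s ∈ Set.Ioo (0 : ℝ) 1,
      (((B + 1) ^ s + (B - 1) ^ s) / ((B + 1) ^ s - (B - 1) ^ s)
          + ((B + 1) ^ (1 - s) + (B - 1) ^ (1 - s))
            / ((B + 1) ^ (1 - s) - (B - 1) ^ (1 - s)))⁻¹
        = (((B + 1) ^ (1 - s) + (B - 1) ^ (1 - s))
            / ((B + 1) ^ (1 - s) - (B - 1) ^ (1 - s))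
          + ((B + 1) ^ s + (B - 1) ^ s) / ((B + 1) ^ s - (B - 1) ^ s))⁻¹) ∧
    (∀ s ∈ Set.Ioo (0 : ℝ) 1,
      2 * (((B + 1) ^ ((1 : ℝ) / 2) + (B - 1) ^ ((1 : ℝ) / 2))
          / ((B + 1) ^ ((1 : ℝ) / 2) - (B - 1) ^ ((1 : ℝ) / 2))) ≤
        ((B + 1) ^ s + (B - 1) ^ s) / ((B + 1) ^ s - (B - 1) ^ s)
          + ((B + 1) ^ (1 - s) + (B - 1) ^ (1 - s))
            / ((B + 1) ^ (1 - s) - (B - 1) ^ (1 - s))) := by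
  have hc : (0 : ℝ) < B - 1 := by linarith
  have hca : B - 1 < B + 1 := by linarith
  exact ⟨strictConcaveOn_inv_powRatio_add_powRatio_one_sub hc hca, fun _ _ => by rw [add_comm],
    fun _ hs => two_mul_powRatio_half_le hc hca hs⟩
end
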